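/- arXiv:1501.02103 — 7 statements merged into one kernel-verified Lean document; each statement's English description precedes it below -/
import Mathlib

section
/- Let A and B be disjoint subsets of V and let λ : 𝔛_{A∪B} → ℝ be (A∪B)-degenerate. Then there exist a finite index set J and, for each j ∈ J, an A-degenerate function λ_A^j : 𝔛_A → ℝ and a B-degenerate function λ_B^j : 𝔛_B → ℝ, such that λ(x_{A∪B}) = Σ_{j∈J} λ_A^j(x_A) · λ_B^j(x_B) for all x ∈ 𝔛_{A∪B}. -/
/-- Let `A` and `B` be disjoint subsets of `V` and let `λ : 𝔛_{A∪B} → ℝ`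
be `(A∪B)`-degenerate (here encoded as a function of the full vector `x ∈ 𝔛_V` that
depends only on the coordinates in `A ∪ B`).  Then `λ` is a finite sum of products of
`A`-degenerate functions of `x_A` with `B`-degenerate functions of `x_B`. -/
theorem degenerate_rank_one_decomposition
    {V : Type*} [Fintype V] [DecidableEq V]
    (X : V → Type*) [∀ v, Fintype (X v)] [∀ v, Nonempty (X v)]
    (A B : Finset V) (hAB : Disjoint A B)
    (lam : (∀ v, X v) → ℝ)
    (hdep : ∀ x y : ∀ v, X v, (∀ v ∈ A ∪ B, x v = y v) → lam x = lam y)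
    (hdeg : ∀ a ∈ A ∪ B, ∀ x : ∀ v, X v, ∑ y : X a, lam (Function.update x a y) = 0) :
    ∃ (n : ℕ) (lamA lamB : Fin n → ((∀ v, X v) → ℝ)),
      (∀ j, (∀ x y : ∀ v, X v, (∀ v ∈ A, x v = y v) → lamA j x = lamA j y) ∧
        (∀ a ∈ A, ∀ x : ∀ v, X v, ∑ y : X a, lamA j (Function.update x a y) = 0)) ∧
      (∀ j, (∀ x y : ∀ v, X v, (∀ v ∈ B, x v = y v) → lamB j x = lamB j y) ∧
        (∀ b ∈ B, ∀ x : ∀ v, X v, ∑ y : X b, lamB j (Function.update x b y) = 0)) ∧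
      (∀ x : ∀ v, X v, lam x = ∑ j, lamA j x * lamB j x) := by
  classical
  induction B using Finset.induction_on generalizing lam with
  | empty =>
    refine ⟨1, fun _ => lam, fun _ _ => 1, ?_, ?_, ?_⟩
    · intro j
      exact ⟨fun x y h => hdep x y (fun v hv => h v (by simpa using hv)),
        fun a ha x => hdeg a (by simpa using ha) x⟩
    · intro j
      exact ⟨fun _ _ _ => rfl, fun b hb => by simp at hb⟩
    · intro x; simp
  | @insert b B' hb ih =>
    have hbA : b ∉ A := fun h =>
      (Finset.disjoint_left.mp hAB h (Finset.mem_insert_self b B'))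
    have hAB' : Disjoint A B' := hAB.mono_right (Finset.subset_insert b B')
    have H : ∀ y : X b, ∃ (n : ℕ) (lamA lamB : Fin n → ((∀ v, X v) → ℝ)),
        (∀ j, (∀ x z : ∀ v, X v, (∀ v ∈ A, x v = z v) → lamA j x = lamA j z) ∧
          (∀ a ∈ A, ∀ x : ∀ v, X v, ∑ w : X a, lamA j (Function.update x a w) = 0)) ∧
        (∀ j, (∀ x z : ∀ v, X v, (∀ v ∈ B', x v = z v) → lamB j x = lamB j z) ∧
          (∀ a ∈ B', ∀ x : ∀ v, X v, ∑ w : X a, lamB j (Function.update x a w) = 0)) ∧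
        (∀ x : ∀ v, X v, lam (Function.update x b y) = ∑ j, lamA j x * lamB j x) := by
      intro y
      refine ih hAB' (fun x => lam (Function.update x b y)) ?_ ?_
      · intro x z h
        refine hdep _ _ ?_
        intro v hv
        rcases eq_or_ne v b with rfl | hvb
        · simp
        · rw [Function.update_of_ne hvb, Function.update_of_ne hvb]
          refine h v ?_
          rcases Finset.mem_union.mp hv with h1 | h1
          · exact Finset.mem_union_left _ h1
          · rcases Finset.mem_insert.mp h1 with rfl | h2
            · exact absurd rfl hvb
            · exact Finset.mem_union_right _ h2
      · intro a ha x
        have hab : a ≠ b := by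
          rintro rfl
          rcases Finset.mem_union.mp ha with h1 | h1
          · exact hbA h1
          · exact hb h1
        have key : ∀ w : X a,
            Function.update (Function.update x a w) b y
              = Function.update (Function.update x b y) a w := by
          intro w
          exact Function.update_comm hab w y x
        simp only [key]
        refine hdeg a ?_ (Function.update x b y)
        rcases Finset.mem_union.mp ha with h1 | h1
        · exact Finset.mem_union_left _ h1
        · exact Finset.mem_union_right _ (Finset.mem_insert_of_mem h1)
    choose n lamA lamB hA hB heq using H
    set c : ℝ := (Fintype.card (X b) : ℝ)⁻¹ with hc
    set g : X b → (∀ v, X v) → ℝ :=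
      fun y x => (if x b = y then (1 : ℝ) else 0) - c with hg
    set J := Σ y : X b, Fin (n y) with hJ
    let e : Fin (Fintype.card J) ≃ J := (Fintype.equivFin J).symm
    refine ⟨Fintype.card J, fun j => lamA (e j).1 (e j).2,
      fun j x => lamB (e j).1 (e j).2 x * g (e j).1 x, ?_, ?_, ?_⟩
    · intro j
      exact hA (e j).1 (e j).2
    · intro j
      constructor
      · intro x z h
        dsimp only
        have h1 : lamB (e j).1 (e j).2 x = lamB (e j).1 (e j).2 z :=
          (hB (e j).1 (e j).2).1 x z (fun v hv => h v (Finset.mem_insert_of_mem hv))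
        have h2 : x b = z b := h b (Finset.mem_insert_self _ _)
        rw [h1, hg]
        simp only [h2]
      · intro a ha x
        dsimp only
        rcases Finset.mem_insert.mp ha with rfl | haB'
        · have h1 : ∀ w : X a, lamB (e j).1 (e j).2 (Function.update x a w)
              = lamB (e j).1 (e j).2 x := by
            intro w
            refine (hB (e j).1 (e j).2).1 _ _ ?_
            intro v hv
            refine Function.update_of_ne ?_ _ _
            rintro rfl
            exact hb hv
          have h2 : ∀ w : X a, g (e j).1 (Function.update x a w)
              = (if w = (e j).1 then (1 : ℝ) else 0) - c := by
            intro w; rw [hg]; simp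
          simp only [h1, h2]
          rw [← Finset.mul_sum]
          have h3 : ∑ w : X a, ((if w = (e j).1 then (1 : ℝ) else 0) - c) = 0 := by
            rw [Finset.sum_sub_distrib]
            rw [Finset.sum_ite_eq' Finset.univ (e j).1 (fun _ => (1 : ℝ))]
            simp only [Finset.mem_univ, if_true, Finset.sum_const, Finset.card_univ,
              nsmul_eq_mul, hc]
            rw [mul_inv_cancel₀ (Nat.cast_ne_zero.mpr Fintype.card_ne_zero), sub_self]
          rw [h3, mul_zero]
        · have hab : a ≠ b := by rintro rfl; exact hb haB'
          have h2 : ∀ w : X a, g (e j).1 (Function.update x a w) = g (e j).1 x := by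
            intro w; rw [hg]
            simp [Function.update_of_ne (Ne.symm hab)]
          simp only [h2]
          rw [← Finset.sum_mul]
          rw [(hB (e j).1 (e j).2).2 a haB' x, zero_mul]
    · intro x
      have h0 : ∑ y : X b, lam (Function.update x b y) = 0 :=
        hdeg b (Finset.mem_union_right _ (Finset.mem_insert_self _ _)) x
      have step1 : lam x = ∑ y : X b, lam (Function.update x b y) * g y x := by
        rw [hg]
        simp only [mul_sub, Finset.sum_sub_distrib, mul_ite, mul_one, mul_zero]
        rw [Finset.sum_ite_eq Finset.univ (x b) (fun y => lam (Function.update x b y)),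
          ← Finset.sum_mul, h0, zero_mul, sub_zero]
        simp [Function.update_eq_self]
      rw [step1]
      have step2 : ∑ y : X b, lam (Function.update x b y) * g y x
          = ∑ y : X b, ∑ j : Fin (n y), lamA y j x * (lamB y j x * g y x) := by
        refine Finset.sum_congr rfl ?_
        intro y _
        rw [heq y x, Finset.sum_mul]
        simp [mul_assoc]
      rw [step2]
      have step3 : ∑ y : X b, ∑ j : Fin (n y), lamA y j x * (lamB y j x * g y x)
          = ∑ p : J, lamA p.1 p.2 x * (lamB p.1 p.2 x * g p.1 x) := by
        rw [← Finset.univ_sigma_univ, Finset.sum_sigma]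
      rw [step3]
      exact (Equiv.sum_comp e (fun p : J => lamA p.1 p.2 x * (lamB p.1 p.2 x * g p.1 x))).symm
end

section
/- Let A, B ⊆ V and suppose |𝔛_d| ≥ 2 for every d ∈ A∩B. Then every (A△B)-degenerate function λ : 𝔛_{A△B} → ℝ can be written as a finite sum of products of an A-degenerate and a B-degenerate function: there exist a finite index set J and, for each j ∈ J, an A-degenerate λ_A^j : 𝔛_A → ℝ and a B-degenerate λ_B^j : 𝔛_B → ℝ, such that for every x ∈ 𝔛_{A∪B}, λ(x_{A△B}) = Σ_{j∈J} λ_A^j(x_A) · λ_B^j(x_B). -/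
open Finset

section Aux

variable {V : Type*} [Fintype V] [DecidableEq V]
variable (X : V → Type*) [∀ v, Fintype (X v)] [∀ v, Nonempty (X v)]

open Classical in
/-- The elementary "degenerate delta" kernel on coordinate `v`. -/
noncomputable def eK (v : V) (y t : X v) : ℝ :=
  (if y = t then 1 else 0) - 1 / (Fintype.card (X v) : ℝ)

lemma cardX_ne (v : V) : (Fintype.card (X v) : ℝ) ≠ 0 := by
  exact_mod_cast Fintype.card_ne_zero

lemma sum_eK_right (v : V) (y : X v) : ∑ t : X v, eK X v y t = 0 := by
  classical
  unfold eK
  rw [Finset.sum_sub_distrib, Finset.sum_ite_eq, Finset.sum_const]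
  simp [Finset.card_univ]

lemma sum_eK_left (v : V) (t : X v) : ∑ y : X v, eK X v y t = 0 := by
  classical
  unfold eK
  rw [Finset.sum_sub_distrib, Finset.sum_ite_eq', Finset.sum_const]
  simp [Finset.card_univ]

lemma sum_eK_sq (v : V) (t : X v) :
    ∑ y : X v, eK X v y t * eK X v y t = 1 - 1 / (Fintype.card (X v) : ℝ) := by
  classical
  have h1 : ∀ y : X v, eK X v y t * eK X v y t
      = (if y = t then eK X v y t else 0) - eK X v y t * (1 / (Fintype.card (X v) : ℝ)) := by
    intro y
    by_cases h : y = t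
    · rw [if_pos h]
      unfold eK
      rw [if_pos h]
      ring
    · rw [if_neg h]
      unfold eK
      rw [if_neg h]
      ring
  rw [Finset.sum_congr rfl (fun y _ => h1 y), Finset.sum_sub_distrib,
    Finset.sum_ite_eq' Finset.univ t, ← Finset.sum_mul, sum_eK_left]
  unfold eK
  rw [if_pos (Finset.mem_univ t), if_pos rfl]
  ring

/-- Summing `F (update u a y)` over all `u` and `y` overcounts by `card (X a)`. -/
lemma sum_update_aux (a : V) (F : (∀ v, X v) → ℝ) :
    ∑ u : ∀ v, X v, ∑ y : X a, F (Function.update u a y)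
      = (Fintype.card (X a) : ℝ) * ∑ u : ∀ v, X v, F u := by
  classical
  set e := Equiv.piSplitAt a X with he
  have hupd : ∀ (p : X a × ∀ v : {v // v ≠ a}, X v) (y : X a),
      Function.update (e.symm p) a y = e.symm (y, p.2) := by
    intro p y
    funext v
    by_cases h : v = a
    · subst h
      simp [he, Function.update_self]
    · rw [Function.update_of_ne h]
      simp only [he, Equiv.piSplitAt_symm_apply]
      rw [dif_neg h, dif_neg h]
  rw [← Equiv.sum_comp e.symm (fun u => ∑ y : X a, F (Function.update u a y)),
      ← Equiv.sum_comp e.symm F]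
  rw [Fintype.sum_prod_type, Fintype.sum_prod_type]
  have : ∀ z : X a, ∀ r, (∑ y : X a, F (Function.update (e.symm (z, r)) a y))
      = ∑ y : X a, F (e.symm (y, r)) := by
    intro z r
    exact Finset.sum_congr rfl fun y _ => by rw [hupd (z, r) y]
  calc ∑ z : X a, ∑ r, ∑ y : X a, F (Function.update (e.symm (z, r)) a y)
      = ∑ z : X a, ∑ r, ∑ y : X a, F (e.symm (y, r)) := by
        exact Finset.sum_congr rfl fun z _ => Finset.sum_congr rfl fun r _ => this z r
    _ = ∑ z : X a, ∑ y : X a, ∑ r, F (e.symm (y, r)) := by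
        exact Finset.sum_congr rfl fun z _ => Finset.sum_comm
    _ = (Fintype.card (X a) : ℝ) * ∑ y : X a, ∑ r, F (e.symm (y, r)) := by
        rw [Finset.sum_const, Finset.card_univ, nsmul_eq_mul]

/-- One-coordinate reproduction: summing a degenerate function against `eK` reproduces it. -/
lemma sum_update_mul_eK (a : V) (μ : (∀ v, X v) → ℝ)
    (h : ∀ z : ∀ v, X v, ∑ y : X a, μ (Function.update z a y) = 0)
    (z : ∀ v, X v) (t : X a) :
    ∑ y : X a, μ (Function.update z a y) * eK X a y t = μ (Function.update z a t) := by
  classical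
  have h1 : ∀ y : X a, μ (Function.update z a y) * eK X a y t
      = (if y = t then μ (Function.update z a y) else 0)
        - μ (Function.update z a y) * (1 / (Fintype.card (X a) : ℝ)) := by
    intro y
    by_cases hy : y = t
    · unfold eK; rw [if_pos hy, if_pos hy]; ring
    · unfold eK; rw [if_neg hy, if_neg hy]; ring
  rw [Finset.sum_congr rfl (fun y _ => h1 y), Finset.sum_sub_distrib,
    Finset.sum_ite_eq' Finset.univ t, ← Finset.sum_mul, h z, if_pos (Finset.mem_univ t)]
  ring

/-- KEY LEMMA: reproduction formula for degenerate functions. -/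
lemma key_repro (S : Finset V) :
    ∀ (φ : ∀ v, X v → ℝ) (μ : (∀ v, X v) → ℝ),
    (∀ a ∈ S, ∀ z : ∀ v, X v, ∑ y : X a, μ (Function.update z a y) = 0) →
    ∀ x : ∀ v, X v,
    (∀ v ∈ S, ∀ y, φ v y = eK X v y (x v)) →
    (∀ v ∉ S, ∑ y : X v, φ v y = 1) →
    ∑ u : ∀ v, X v, μ (S.piecewise u x) * ∏ v, φ v (u v) = μ x := by
  classical
  induction S using Finset.induction_on with
  | empty =>
    intro φ μ hdeg x hin hout
    simp only [Finset.piecewise_empty]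
    rw [← Finset.mul_sum, ← Fintype.piFinset_univ, ← Finset.prod_univ_sum]
    rw [Finset.prod_congr rfl (fun v _ => hout v (Finset.notMem_empty v))]
    simp
  | @insert a S' ha ih =>
    intro φ μ hdeg x hin hout
    have hm : (Fintype.card (X a) : ℝ) ≠ 0 := cardX_ne X a
    set φ' : ∀ v, X v → ℝ :=
      fun v y => if v = a then (Fintype.card (X a) : ℝ)⁻¹ else φ v y with hφ'
    have hstep : ∀ u : ∀ v, X v,
        (∑ y : X a, μ ((insert a S').piecewise (Function.update u a y) x)
          * ∏ v, φ v (Function.update u a y v))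
        = (Fintype.card (X a) : ℝ) * (μ (S'.piecewise u x) * ∏ v, φ' v (u v)) := by
      intro u
      have hp : ∀ y, (insert a S').piecewise (Function.update u a y) x
          = Function.update (S'.piecewise u x) a y := by
        intro y
        rw [Finset.piecewise_insert]
        have h1 : S'.piecewise (Function.update u a y) x = S'.piecewise u x :=
          S'.piecewise_congr
            (fun v hv => Function.update_of_ne (ne_of_mem_of_not_mem hv ha) y u)
            (fun _ _ => rfl)
        rw [h1, Function.update_self]
      have hprod : ∀ y, (∏ v, φ v (Function.update u a y v))
          = φ a y * ∏ v ∈ {a}ᶜ, φ v (u v) := by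
        intro y
        rw [Fintype.prod_eq_mul_prod_compl a, Function.update_self]
        congr 1
        exact Finset.prod_congr rfl fun v hv => by
          rw [Function.update_of_ne (Finset.notMem_singleton.mp (Finset.mem_compl.mp hv))]
      have hsum : (∑ y : X a, μ (Function.update (S'.piecewise u x) a y) * φ a y)
          = μ (S'.piecewise u x) := by
        have hφa : ∀ y, φ a y = eK X a y (x a) := hin a (Finset.mem_insert_self a S')
        rw [Finset.sum_congr rfl (fun y _ => by rw [hφa y])]
        rw [sum_update_mul_eK X a μ (hdeg a (Finset.mem_insert_self a S'))]
        have : (S'.piecewise u x) a = x a := Finset.piecewise_eq_of_notMem _ _ _ ha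
        rw [← this, Function.update_eq_self]
      have hφ'prod : (∏ v, φ' v (u v))
          = (Fintype.card (X a) : ℝ)⁻¹ * ∏ v ∈ {a}ᶜ, φ v (u v) := by
        rw [Fintype.prod_eq_mul_prod_compl a]
        have h2 : φ' a (u a) = (Fintype.card (X a) : ℝ)⁻¹ := if_pos rfl
        rw [h2]
        congr 1
        exact Finset.prod_congr rfl fun v hv => by
          simp only [hφ']
          rw [if_neg (Finset.notMem_singleton.mp (Finset.mem_compl.mp hv))]
      calc (∑ y : X a, μ ((insert a S').piecewise (Function.update u a y) x)
              * ∏ v, φ v (Function.update u a y v))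
          = ∑ y : X a, (μ (Function.update (S'.piecewise u x) a y) * φ a y)
              * ∏ v ∈ {a}ᶜ, φ v (u v) := by
            exact Finset.sum_congr rfl fun y _ => by rw [hp y, hprod y]; ring
        _ = (∑ y : X a, μ (Function.update (S'.piecewise u x) a y) * φ a y)
              * ∏ v ∈ {a}ᶜ, φ v (u v) := by rw [Finset.sum_mul]
        _ = μ (S'.piecewise u x) * ∏ v ∈ {a}ᶜ, φ v (u v) := by rw [hsum]
        _ = (Fintype.card (X a) : ℝ) * (μ (S'.piecewise u x) * ∏ v, φ' v (u v)) := by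
            rw [hφ'prod]
            field_simp
    have hmain : (∑ u : ∀ v, X v, μ ((insert a S').piecewise u x) * ∏ v, φ v (u v))
        = ∑ u : ∀ v, X v, μ (S'.piecewise u x) * ∏ v, φ' v (u v) := by
      have h1 := sum_update_aux X a
        (fun u => μ ((insert a S').piecewise u x) * ∏ v, φ v (u v))
      have h2 : (∑ u : ∀ v, X v, ∑ y : X a,
          μ ((insert a S').piecewise (Function.update u a y) x)
            * ∏ v, φ v (Function.update u a y v))
          = (Fintype.card (X a) : ℝ)
            * ∑ u : ∀ v, X v, μ (S'.piecewise u x) * ∏ v, φ' v (u v) := by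
        rw [Finset.sum_congr rfl (fun u _ => hstep u), ← Finset.mul_sum]
      have := h1.symm.trans h2
      exact mul_left_cancel₀ hm this
    rw [hmain]
    refine ih φ' μ (fun b hb z => hdeg b (Finset.mem_insert_of_mem hb) z) x ?_ ?_
    · intro v hv y
      have hva : v ≠ a := fun h => ha (h ▸ hv)
      simp only [hφ']
      rw [if_neg hva]
      exact hin v (Finset.mem_insert_of_mem hv) y
    · intro v hv
      by_cases hva : v = a
      · subst hva
        simp only [hφ', if_pos rfl]
        rw [Finset.sum_const, Finset.card_univ, nsmul_eq_mul]
        field_simp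
      · simp only [hφ']
        rw [Finset.sum_congr rfl (fun y _ => by rw [if_neg hva])]
        exact hout v (fun h => (Finset.mem_insert.mp h).elim hva hv)

noncomputable def phiA (A B : Finset V) (v : V) (y t : X v) : ℝ :=
  if v ∈ A \ B then eK X v y t
  else if v ∈ A ∩ B then
    ((Fintype.card (X v) : ℝ) / ((Fintype.card (X v) : ℝ) - 1)) * eK X v y t
  else if v ∈ B then 1 else (Fintype.card (X v) : ℝ)⁻¹

noncomputable def phiB (B : Finset V) (v : V) (y t : X v) : ℝ :=
  if v ∈ B then eK X v y t else 1

lemma sum_phiA_right (A B : Finset V) (a : V) (ha : a ∈ A) (y : X a) :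
    ∑ t : X a, phiA X A B a y t = 0 := by
  classical
  by_cases hb : a ∈ B
  · have h1 : a ∉ A \ B := fun hc => (Finset.mem_sdiff.mp hc).2 hb
    have h2 : a ∈ A ∩ B := Finset.mem_inter.mpr ⟨ha, hb⟩
    unfold phiA
    rw [Finset.sum_congr rfl fun t _ => by rw [if_neg h1, if_pos h2],
      ← Finset.mul_sum, sum_eK_right, mul_zero]
  · have h1 : a ∈ A \ B := Finset.mem_sdiff.mpr ⟨ha, hb⟩
    unfold phiA
    rw [Finset.sum_congr rfl fun t _ => by rw [if_pos h1]]
    exact sum_eK_right X a y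

lemma sum_phiB_right (B : Finset V) (b : V) (hb : b ∈ B) (y : X b) :
    ∑ t : X b, phiB X B b y t = 0 := by
  unfold phiB
  rw [Finset.sum_congr rfl fun t _ => by rw [if_pos hb]]
  exact sum_eK_right X b y

end Aux


/-- Let `A, B ⊆ V` with `|𝔛_d| ≥ 2` for every `d ∈ A ∩ B`.  Then every
`(A △ B)`-degenerate function `λ : 𝔛_{A△B} → ℝ` (encoded as a function of the full
vector `x ∈ 𝔛_V` depending only on the coordinates in `A △ B = (A∖B) ∪ (B∖A)`) can be
written as a finite sum of products of an `A`-degenerate and a `B`-degenerate function. -/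
theorem degenerate_symmdiff_decomposition
    {V : Type*} [Fintype V] [DecidableEq V]
    (X : V → Type*) [∀ v, Fintype (X v)] [∀ v, Nonempty (X v)]
    (A B : Finset V) (hcard : ∀ d ∈ A ∩ B, 2 ≤ Fintype.card (X d))
    (lam : (∀ v, X v) → ℝ)
    (hdep : ∀ x y : ∀ v, X v, (∀ v ∈ (A \ B) ∪ (B \ A), x v = y v) → lam x = lam y)
    (hdeg : ∀ a ∈ (A \ B) ∪ (B \ A), ∀ x : ∀ v, X v,
      ∑ y : X a, lam (Function.update x a y) = 0) :
    ∃ (n : ℕ) (lamA lamB : Fin n → ((∀ v, X v) → ℝ)),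
      (∀ j, (∀ x y : ∀ v, X v, (∀ v ∈ A, x v = y v) → lamA j x = lamA j y) ∧
        (∀ a ∈ A, ∀ x : ∀ v, X v, ∑ y : X a, lamA j (Function.update x a y) = 0)) ∧
      (∀ j, (∀ x y : ∀ v, X v, (∀ v ∈ B, x v = y v) → lamB j x = lamB j y) ∧
        (∀ b ∈ B, ∀ x : ∀ v, X v, ∑ y : X b, lamB j (Function.update x b y) = 0)) ∧
      (∀ x : ∀ v, X v, lam x = ∑ j, lamA j x * lamB j x) := by
  classical
  set D : Finset V := (A \ B) ∪ (B \ A) with hDdef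
  set x₀ : ∀ v, X v := fun v => Classical.arbitrary (X v) with hx₀
  set e : Fin (Fintype.card (∀ v, X v)) ≃ (∀ v, X v) :=
    (Fintype.equivFin (∀ v, X v)).symm with he
  refine ⟨Fintype.card (∀ v, X v),
    fun j x => lam (D.piecewise (e j) x₀) * ∏ v, phiA X A B v (e j v) (x v),
    fun j x => ∏ v, phiB X B v (e j v) (x v), ?_, ?_, ?_⟩
  · intro j
    constructor
    · intro x y h
      dsimp only
      have hpr : (∏ v, phiA X A B v (e j v) (x v)) = ∏ v, phiA X A B v (e j v) (y v) := by
        refine Finset.prod_congr rfl fun v _ => ?_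
        by_cases hv : v ∈ A
        · rw [h v hv]
        · unfold phiA
          rw [if_neg (fun hc => hv (Finset.mem_sdiff.mp hc).1),
              if_neg (fun hc => hv (Finset.mem_inter.mp hc).1),
              if_neg (fun hc => hv (Finset.mem_sdiff.mp hc).1),
              if_neg (fun hc => hv (Finset.mem_inter.mp hc).1)]
      rw [hpr]
    · intro a haA x
      dsimp only
      rw [← Finset.mul_sum]
      have hsplit : ∀ y : X a, (∏ v, phiA X A B v (e j v) (Function.update x a y v))
          = phiA X A B a (e j a) y * ∏ v ∈ {a}ᶜ, phiA X A B v (e j v) (x v) := by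
        intro y
        rw [Fintype.prod_eq_mul_prod_compl a, Function.update_self]
        congr 1
        exact Finset.prod_congr rfl fun v hv => by
          rw [Function.update_of_ne (Finset.notMem_singleton.mp (Finset.mem_compl.mp hv))]
      rw [Finset.sum_congr rfl fun y _ => hsplit y, ← Finset.sum_mul,
        sum_phiA_right X A B a haA (e j a), zero_mul, mul_zero]
  · intro j
    constructor
    · intro x y h
      dsimp only
      refine Finset.prod_congr rfl fun v _ => ?_
      by_cases hv : v ∈ B
      · rw [h v hv]
      · unfold phiB
        rw [if_neg hv, if_neg hv]
    · intro b hbB x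
      dsimp only
      have hsplit : ∀ y : X b, (∏ v, phiB X B v (e j v) (Function.update x b y v))
          = phiB X B b (e j b) y * ∏ v ∈ {b}ᶜ, phiB X B v (e j v) (x v) := by
        intro y
        rw [Fintype.prod_eq_mul_prod_compl b, Function.update_self]
        congr 1
        exact Finset.prod_congr rfl fun v hv => by
          rw [Function.update_of_ne (Finset.notMem_singleton.mp (Finset.mem_compl.mp hv))]
      rw [Finset.sum_congr rfl fun y _ => hsplit y, ← Finset.sum_mul,
        sum_phiB_right X B b hbB (e j b), zero_mul]
  · intro x
    dsimp only
    have hin : ∀ v ∈ D, ∀ y : X v,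
        phiA X A B v y (x v) * phiB X B v y (x v) = eK X v y (x v) := by
      intro v hv y
      rcases Finset.mem_union.mp hv with h | h
      · obtain ⟨hA, hB⟩ := Finset.mem_sdiff.mp h
        unfold phiA phiB
        rw [if_pos h, if_neg hB, mul_one]
      · obtain ⟨hB, hA⟩ := Finset.mem_sdiff.mp h
        unfold phiA phiB
        rw [if_neg (fun hc => hA (Finset.mem_sdiff.mp hc).1),
            if_neg (fun hc => hA (Finset.mem_inter.mp hc).1),
            if_pos hB, if_pos hB, one_mul]
    have hout : ∀ v ∉ D, ∑ y : X v, phiA X A B v y (x v) * phiB X B v y (x v) = 1 := by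
      intro v hv
      rw [hDdef] at hv
      have hns : v ∉ A \ B := fun hc => hv (Finset.mem_union_left _ hc)
      have hns' : v ∉ B \ A := fun hc => hv (Finset.mem_union_right _ hc)
      by_cases hA : v ∈ A
      · have hB : v ∈ B := by
          by_contra hB
          exact hns (Finset.mem_sdiff.mpr ⟨hA, hB⟩)
        have hAB : v ∈ A ∩ B := Finset.mem_inter.mpr ⟨hA, hB⟩
        have h2 : (2 : ℝ) ≤ (Fintype.card (X v) : ℝ) := by
          exact_mod_cast hcard v hAB
        have hm : (Fintype.card (X v) : ℝ) ≠ 0 := by linarith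
        have hm1 : (Fintype.card (X v) : ℝ) - 1 ≠ 0 := by
          intro hc; rw [sub_eq_zero] at hc; linarith [hc]
        have hterm : ∀ y : X v, phiA X A B v y (x v) * phiB X B v y (x v)
            = ((Fintype.card (X v) : ℝ) / ((Fintype.card (X v) : ℝ) - 1))
              * (eK X v y (x v) * eK X v y (x v)) := by
          intro y
          unfold phiA phiB
          rw [if_neg hns, if_pos hAB, if_pos hB]
          ring
        rw [Finset.sum_congr rfl fun y _ => hterm y, ← Finset.mul_sum, sum_eK_sq]
        field_simp
      · have hB : v ∉ B := by
          intro hB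
          exact hns' (Finset.mem_sdiff.mpr ⟨hB, hA⟩)
        have hterm : ∀ y : X v, phiA X A B v y (x v) * phiB X B v y (x v)
            = (Fintype.card (X v) : ℝ)⁻¹ := by
          intro y
          unfold phiA phiB
          rw [if_neg hns, if_neg (fun hc => hA (Finset.mem_inter.mp hc).1),
            if_neg hB, if_neg hB, mul_one]
        rw [Finset.sum_congr rfl fun y _ => hterm y, Finset.sum_const,
          Finset.card_univ, nsmul_eq_mul]
        field_simp
    have hG : (∑ u : ∀ v, X v,
        (lam (D.piecewise u x₀) * ∏ v, phiA X A B v (u v) (x v))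
          * ∏ v, phiB X B v (u v) (x v)) = lam x := by
      have hper : ∀ u : ∀ v, X v,
          (lam (D.piecewise u x₀) * ∏ v, phiA X A B v (u v) (x v))
            * ∏ v, phiB X B v (u v) (x v)
          = lam (D.piecewise u x)
            * ∏ v, (phiA X A B v (u v) (x v) * phiB X B v (u v) (x v)) := by
        intro u
        rw [mul_assoc, ← Finset.prod_mul_distrib]
        congr 1
        refine hdep _ _ fun v hv => ?_
        rw [Finset.piecewise_eq_of_mem _ _ _ hv, Finset.piecewise_eq_of_mem _ _ _ hv]
      rw [Finset.sum_congr rfl fun u _ => hper u]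
      exact key_repro X D _ lam hdeg x hin hout
    calc lam x
        = ∑ u : ∀ v, X v,
            (lam (D.piecewise u x₀) * ∏ v, phiA X A B v (u v) (x v))
              * ∏ v, phiB X B v (u v) (x v) := hG.symm
      _ = ∑ j, (lam (D.piecewise (e j) x₀) * ∏ v, phiA X A B v (e j v) (x v))
              * ∏ v, phiB X B v (e j v) (x v) := (Equiv.sum_comp e _).symm
end

section
/- Let I be a nonempty finite index set, let A_i ⊆ V for each i ∈ I, let A = △_{i∈I} A_i be the iterated symmetric difference (the set of elements lying in an odd number of the A_i), and suppose |𝔛_v| ≥ 2 for every v ∈ ⋃_{i∈I} A_i. Then for every A-degenerate function λ : 𝔛_A → ℝ there exist a finite index set J and A_i-degenerate functions λ_i^j : 𝔛_{A_i} → ℝ (for i ∈ I, j ∈ J) such that for every x ∈ 𝔛_{⋃_i A_i}, λ(x_A) = Σ_{j∈J} ∏_{i∈I} λ_i^j(x_{A_i}). -/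
/-!
Write `D B` for the `B`-degenerate functions, a submodule of the algebra of functions on
`∀ v, X v`, and `M v = D {v}` for the mean-zero functions of `x v`. Expanding in the centred
indicators `e t = 𝟙_{t} - 1 / |X a|` in a coordinate `a ∈ B` gives `D B = ∏ v ∈ B, M v`.
If `|X v| ≥ 2`, then `1 = (1 - 1 / |X v|)⁻¹ ∑ t, e t (x v) ^ 2`, so `1 ≤ M v ^ 2`, whence
`M v ≤ M v ^ k` for odd `k` and `1 ≤ M v ^ k` for even `k`. The multiplicity
`k v = #{i ∈ I | v ∈ A i}` is odd exactly on `A`, so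
`D A ≤ ∏ v, M v ^ k v = ∏ i ∈ I, ∏ v ∈ A i, M v = ∏ i ∈ I, D (A i)`. An element of a product
of submodules is a sum of products, the scalars being absorbed into one factor as `I ≠ ∅`.
-/

open Finset Function

section OrderedMonoid

variable {M : Type*} [Monoid M] [Preorder M] [MulLeftMono M] {a : M} {n : ℕ}

theorem one_le_pow_of_one_le_sq (h : 1 ≤ a ^ 2) (hn : Even n) : 1 ≤ a ^ n := by
  obtain ⟨k, rfl⟩ := hn
  rw [← two_mul, pow_mul]
  exact one_le_pow_of_one_le' h k

theorem le_pow_of_one_le_sq [MulRightMono M] (h : 1 ≤ a ^ 2) (hn : Odd n) : a ≤ a ^ n := by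
  obtain ⟨k, rfl⟩ := hn
  rw [pow_succ]
  exact le_mul_of_one_le_left' (one_le_pow_of_one_le_sq h (even_two_mul k))

end OrderedMonoid

section CenteredIndicator

variable {R α : Type*} [Field R] [Fintype α] [DecidableEq α]

def centeredIndicator (t : α) : α → R :=
  fun s => (if s = t then 1 else 0) - (Fintype.card α : R)⁻¹

theorem sum_centeredIndicator [CharZero R] (t : α) :
    ∑ s, centeredIndicator (R := R) t s = 0 := by
  have : Nonempty α := ⟨t⟩
  have hcard : (Fintype.card α : R) ≠ 0 := Nat.cast_ne_zero.2 Fintype.card_ne_zero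
  simp [centeredIndicator, sum_sub_distrib, hcard]

theorem sum_mul_centeredIndicator {φ : α → R} (hφ : ∑ t, φ t = 0) (s : α) :
    ∑ t, φ t * centeredIndicator t s = φ s := by
  simp [centeredIndicator, mul_sub, sum_sub_distrib, ← sum_mul, hφ]

theorem centeredIndicator_comm (s t : α) :
    centeredIndicator (R := R) t s = centeredIndicator s t := by
  simp [centeredIndicator, eq_comm]

theorem sum_centeredIndicator_mul_self [CharZero R] (s : α) :
    ∑ t, centeredIndicator (R := R) t s * centeredIndicator t s =
      1 - (Fintype.card α : R)⁻¹ := by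
  rw [sum_mul_centeredIndicator (by simpa [centeredIndicator_comm] using sum_centeredIndicator s)]
  simp [centeredIndicator]

end CenteredIndicator

theorem Submodule.exists_sum_prod_of_mem_prod {R A ι : Type*} [CommSemiring R]
    [CommSemiring A] [Algebra R A] {I : Finset ι} (hI : I.Nonempty) {p : ι → Submodule R A}
    {a : A} (ha : a ∈ ∏ i ∈ I, p i) :
    ∃ (n : ℕ) (g : Fin n → ι → A),
      (∀ j, ∀ i ∈ I, g j i ∈ p i) ∧ a = ∑ j, ∏ i ∈ I, g j i := by
  classical
  obtain ⟨i₀, hi₀⟩ := hI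
  rw [← prod_congr rfl fun i _ => (p i).span_eq, Submodule.prod_span] at ha
  obtain ⟨n, c, b, rfl⟩ := Submodule.mem_span_set'.1 ha
  choose f hf hfb using fun j => (Set.mem_finsetProd _ _ _).1 (b j).2
  refine ⟨n, fun j i => (if i = i₀ then c j else 1) • f j i,
    fun j i hi => Submodule.smul_mem _ _ (hf j hi), ?_⟩
  simp_rw [Finset.prod_smul, prod_ite_eq' I i₀, if_pos hi₀, hfb]

section Degenerate

variable (R : Type*) [CommRing R] {V : Type*} [DecidableEq V] (X : V → Type*)
  [∀ v, Fintype (X v)]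

def degenerateSubmodule (B : Finset V) : Submodule R ((∀ v, X v) → R) where
  carrier := {f | (∀ x y, (∀ v ∈ B, x v = y v) → f x = f y) ∧
    ∀ a ∈ B, ∀ x, ∑ y : X a, f (update x a y) = 0}
  add_mem' := by
    rintro f g ⟨hf, hf'⟩ ⟨hg, hg'⟩
    refine ⟨fun x y hxy => congr_arg₂ (· + ·) (hf x y hxy) (hg x y hxy), fun a ha x => ?_⟩
    simp [sum_add_distrib, hf' a ha x, hg' a ha x]
  zero_mem' := by simp
  smul_mem' := by
    rintro c f ⟨hf, hf'⟩
    refine ⟨fun x y hxy => by simp [hf x y hxy], fun a ha x => ?_⟩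
    simp [← mul_sum, hf' a ha x]

variable {R X}

@[simp]
theorem mem_degenerateSubmodule {B : Finset V} {f : (∀ v, X v) → R} :
    f ∈ degenerateSubmodule R X B ↔ (∀ x y, (∀ v ∈ B, x v = y v) → f x = f y) ∧
      ∀ a ∈ B, ∀ x, ∑ y : X a, f (update x a y) = 0 :=
  Iff.rfl

theorem comp_eval_mem_degenerateSubmodule_singleton {v : V} {φ : X v → R}
    (hφ : ∑ t, φ t = 0) : (fun x => φ (x v)) ∈ degenerateSubmodule R X {v} := by
  refine ⟨fun x y hxy => by simp [hxy v (mem_singleton_self v)], ?_⟩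
  simpa using fun _ => hφ

theorem apply_update_of_mem_degenerateSubmodule {B : Finset V} {f : (∀ v, X v) → R}
    (hf : f ∈ degenerateSubmodule R X B) {a : V} (ha : a ∉ B) (x : ∀ v, X v) (y : X a) :
    f (update x a y) = f x :=
  hf.1 _ _ fun _ hv => update_of_ne (ne_of_mem_of_not_mem hv ha) _ _

theorem mul_le_degenerateSubmodule_union {B C : Finset V} (h : Disjoint B C) :
    degenerateSubmodule R X B * degenerateSubmodule R X C ≤
      degenerateSubmodule R X (B ∪ C) := by
  refine Submodule.mul_le.2 fun f hf g hg => ⟨fun x y hxy => ?_, fun a ha x => ?_⟩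
  · rw [Pi.mul_apply, Pi.mul_apply, hf.1 x y fun v hv => hxy v (mem_union_left C hv),
      hg.1 x y fun v hv => hxy v (mem_union_right B hv)]
  · rcases mem_union.1 ha with haB | haC
    · simp_rw [Pi.mul_apply, apply_update_of_mem_degenerateSubmodule hg (disjoint_left.1 h haB),
        ← sum_mul, hf.2 a haB x, zero_mul]
    · simp_rw [Pi.mul_apply, apply_update_of_mem_degenerateSubmodule hf (disjoint_right.1 h haC),
        ← mul_sum, hg.2 a haC x, mul_zero]

theorem degenerateSubmodule_empty : degenerateSubmodule R X ∅ = 1 := by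
  refine le_antisymm (fun f ⟨hf, _⟩ => Submodule.mem_one.2 ?_) (Submodule.one_le.2 (by simp))
  rcases isEmpty_or_nonempty (∀ v, X v) with hX | ⟨⟨x₀⟩⟩
  · exact ⟨0, funext hX.elim⟩
  · exact ⟨f x₀, funext fun x => hf x₀ x (by simp)⟩

end Degenerate

section DegenerateField

variable {R : Type*} [Field R] [CharZero R] {V : Type*} [DecidableEq V] {X : V → Type*}
  [∀ v, Fintype (X v)]

theorem degenerateSubmodule_insert_le_mul {a : V} {B : Finset V} (ha : a ∉ B) :
    degenerateSubmodule R X (insert a B) ≤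
      degenerateSubmodule R X {a} * degenerateSubmodule R X B := by
  classical
  rintro f ⟨hf, hf'⟩
  have hslice (t : X a) : (fun x => f (update x a t)) ∈ degenerateSubmodule R X B := by
    refine ⟨fun x y hxy => hf _ _ fun v hv => ?_, fun b hb x => ?_⟩
    · rcases eq_or_ne v a with rfl | hva
      · simp
      · simp [update_of_ne hva, hxy v ((mem_insert.1 hv).resolve_left hva)]
    · simp_rw [update_comm (ne_of_mem_of_not_mem hb ha)]
      exact hf' b (mem_insert_of_mem hb) _
  have hf_eq : f = ∑ t, (fun x => centeredIndicator t (x a)) * fun x => f (update x a t) := by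
    funext x
    simp only [Finset.sum_apply, Pi.mul_apply, mul_comm (centeredIndicator _ _)]
    rw [sum_mul_centeredIndicator (hf' a (mem_insert_self a B) x), update_eq_self]
  rw [hf_eq]
  exact sum_mem fun t _ => Submodule.mul_mem_mul
    (comp_eval_mem_degenerateSubmodule_singleton (sum_centeredIndicator t)) (hslice t)

theorem degenerateSubmodule_eq_prod (B : Finset V) :
    degenerateSubmodule R X B = ∏ v ∈ B, degenerateSubmodule R X {v} := by
  induction B using Finset.induction_on with
  | empty => simp [degenerateSubmodule_empty]
  | insert a B ha ih =>
    rw [prod_insert ha, ← ih]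
    refine le_antisymm (degenerateSubmodule_insert_le_mul ha) ?_
    rw [insert_eq]
    exact mul_le_degenerateSubmodule_union (disjoint_singleton_left.2 ha)

theorem one_le_degenerateSubmodule_singleton_sq {v : V}
    (h : 2 ≤ Fintype.card (X v)) : 1 ≤ degenerateSubmodule R X {v} ^ 2 := by
  classical
  set c : R := 1 - (Fintype.card (X v) : R)⁻¹
  have hc : c ≠ 0 := by
    rw [sub_ne_zero, ne_comm, inv_ne_one]
    exact_mod_cast (by omega : Fintype.card (X v) ≠ 1)
  have hone : (1 : (∀ v, X v) → R) =
      ∑ t, (c⁻¹ • fun x => centeredIndicator t (x v)) * fun x => centeredIndicator t (x v) := by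
    funext x
    simp [Finset.sum_apply, ← mul_sum, sum_centeredIndicator_mul_self, c, inv_mul_cancel₀ hc]
  rw [Submodule.one_le, hone, sq]
  have hmem (t : X v) :=
    comp_eval_mem_degenerateSubmodule_singleton (X := X) (sum_centeredIndicator (R := R) t)
  exact sum_mem fun t _ => Submodule.mul_mem_mul (Submodule.smul_mem _ _ (hmem t)) (hmem t)

theorem degenerateSubmodule_filter_odd_le_prod [Fintype V] {ι : Type*}
    (I : Finset ι) (Ai : ι → Finset V) (hcard : ∀ v ∈ I.biUnion Ai, 2 ≤ Fintype.card (X v)) :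
    degenerateSubmodule R X (univ.filter fun v => Odd (I.filter fun i => v ∈ Ai i).card) ≤
      ∏ i ∈ I, degenerateSubmodule R X (Ai i) := by
  set S := fun v => I.filter fun i => v ∈ Ai i
  set D := fun v => degenerateSubmodule R X {v}
  have hvertex (v : V) : (if Odd (S v).card then D v else 1) ≤ D v ^ (S v).card := by
    rcases (S v).eq_empty_or_nonempty with h | ⟨i, hi⟩
    · simp [h]
    have hsq := one_le_degenerateSubmodule_singleton_sq (R := R)
      (hcard v (mem_biUnion.2 ⟨i, mem_filter.1 hi⟩))
    split_ifs with hodd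
    · exact le_pow_of_one_le_sq hsq hodd
    · exact one_le_pow_of_one_le_sq hsq (Nat.not_odd_iff_even.1 hodd)
  calc degenerateSubmodule R X (univ.filter fun v => Odd (S v).card)
      = ∏ v, if Odd (S v).card then D v else 1 := by
        rw [degenerateSubmodule_eq_prod, prod_filter]
    _ ≤ ∏ v, D v ^ (S v).card := prod_le_prod' fun v _ => hvertex v
    _ = ∏ v, ∏ i ∈ S v, D v := by simp only [prod_const]
    _ = ∏ i ∈ I, ∏ v ∈ Ai i, D v := prod_comm' fun v i => by simp [S, and_comm]
    _ = ∏ i ∈ I, degenerateSubmodule R X (Ai i) := by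
        simp only [D, ← degenerateSubmodule_eq_prod]

end DegenerateField

theorem degenerate_iterated_symmdiff_decomposition_general
    {V : Type*} [Fintype V] [DecidableEq V]
    (X : V → Type*) [∀ v, Fintype (X v)]
    {ι : Type*} (I : Finset ι) (hI : I.Nonempty)
    (Ai : ι → Finset V)
    (A : Finset V)
    (hA : A = Finset.univ.filter (fun v => Odd ((I.filter (fun i => v ∈ Ai i)).card)))
    (hcard : ∀ v ∈ I.biUnion Ai, 2 ≤ Fintype.card (X v))
    (lam : (∀ v, X v) → ℝ)
    (hdep : ∀ x y : ∀ v, X v, (∀ v ∈ A, x v = y v) → lam x = lam y)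
    (hdeg : ∀ a ∈ A, ∀ x : ∀ v, X v, ∑ y : X a, lam (Function.update x a y) = 0) :
    ∃ (n : ℕ) (lamF : Fin n → ι → ((∀ v, X v) → ℝ)),
      (∀ j, ∀ i ∈ I,
        (∀ x y : ∀ v, X v, (∀ v ∈ Ai i, x v = y v) → lamF j i x = lamF j i y) ∧
        (∀ a ∈ Ai i, ∀ x : ∀ v, X v, ∑ y : X a, lamF j i (Function.update x a y) = 0)) ∧
      (∀ x : ∀ v, X v, lam x = ∑ j, ∏ i ∈ I, lamF j i x) := by
  subst hA
  have hlam : lam ∈ degenerateSubmodule ℝ X _ := mem_degenerateSubmodule.2 ⟨hdep, hdeg⟩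
  obtain ⟨n, lamF, hlamF, rfl⟩ :=
    Submodule.exists_sum_prod_of_mem_prod hI
      (degenerateSubmodule_filter_odd_le_prod I Ai hcard hlam)
  exact ⟨n, lamF, hlamF, fun x => by simp only [Finset.sum_apply, Finset.prod_apply]⟩

/-- Let `I` be a nonempty finite index set, `A_i ⊆ V` for `i ∈ I`, and let
`A = △_{i∈I} A_i` be the iterated symmetric difference (the set of elements lying in an
odd number of the `A_i`).  Suppose `|𝔛_v| ≥ 2` for every `v ∈ ⋃_{i∈I} A_i`.  Then every
`A`-degenerate function `λ : 𝔛_A → ℝ` (encoded as a function of the full vector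
`x ∈ 𝔛_V` depending only on the coordinates in `A`) is a finite sum of products of
`A_i`-degenerate functions. -/
theorem degenerate_iterated_symmdiff_decomposition
    {V : Type*} [Fintype V] [DecidableEq V]
    (X : V → Type*) [∀ v, Fintype (X v)] [∀ v, Nonempty (X v)]
    {ι : Type*} [DecidableEq ι] (I : Finset ι) (hI : I.Nonempty)
    (Ai : ι → Finset V)
    (A : Finset V)
    (hA : A = Finset.univ.filter (fun v => Odd ((I.filter (fun i => v ∈ Ai i)).card)))
    (hcard : ∀ v ∈ I.biUnion Ai, 2 ≤ Fintype.card (X v))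
    (lam : (∀ v, X v) → ℝ)
    (hdep : ∀ x y : ∀ v, X v, (∀ v ∈ A, x v = y v) → lam x = lam y)
    (hdeg : ∀ a ∈ A, ∀ x : ∀ v, X v, ∑ y : X a, lam (Function.update x a y) = 0) :
    ∃ (n : ℕ) (lamF : Fin n → ι → ((∀ v, X v) → ℝ)),
      (∀ j, ∀ i ∈ I,
        (∀ x y : ∀ v, X v, (∀ v ∈ Ai i, x v = y v) → lamF j i x = lamF j i y) ∧
        (∀ a ∈ Ai i, ∀ x : ∀ v, X v, ∑ y : X a, lamF j i (Function.update x a y) = 0)) ∧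
      (∀ x : ∀ v, X v, lam x = ∑ j, ∏ i ∈ I, lamF j i x) :=
  degenerate_iterated_symmdiff_decomposition_general X I hI Ai A hA hcard lam hdep hdeg
end

section
/- Let D be a finite set and for each d ∈ D let 𝔛_d be a nonempty finite set. For each y ∈ 𝔛_D define μ(·; y) : 𝔛_D → ℝ by μ(x; y) = ∏_{d∈D} (|𝔛_d| · 1{x_d = y_d} − 1). Then: (i) for each fixed y ∈ 𝔛_D, the function μ(·; y) is D-degenerate; and (ii) for every x ∈ 𝔛_D, Σ_{y ∈ 𝔛_D} μ(x; y)² = ∏_{d∈D} |𝔛_d|·(|𝔛_d| − 1); in particular this sum does not depend on x. -/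
/-- Let `D` be a finite set and for each `d ∈ D` let `𝔛_d` be a nonempty
finite set.  For each `y ∈ 𝔛_D` define `μ(·; y) : 𝔛_D → ℝ` by
`μ(x; y) = ∏_{d∈D} (|𝔛_d| · 1{x_d = y_d} − 1)`.  Then (i) for each fixed `y`, the
function `μ(·; y)` is `D`-degenerate; and (ii) for every `x ∈ 𝔛_D`,
`∑_{y ∈ 𝔛_D} μ(x; y)² = ∏_{d∈D} |𝔛_d|·(|𝔛_d| − 1)` (in particular the sum does not
depend on `x`). -/
theorem eta_degenerate_and_sum_sq
    {D : Type*} [Fintype D] [DecidableEq D]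
    (X : D → Type*) [∀ d, Fintype (X d)] [∀ d, Nonempty (X d)] [∀ d, DecidableEq (X d)]
    (mu : (∀ d, X d) → (∀ d, X d) → ℝ)
    (hmu : ∀ x y : ∀ d, X d,
      mu x y = ∏ d, ((Fintype.card (X d) : ℝ) * (if x d = y d then 1 else 0) - 1)) :
    (∀ y : ∀ d, X d, ∀ a : D, ∀ x : ∀ d, X d,
        ∑ z : X a, mu (Function.update x a z) y = 0) ∧
    (∀ x : ∀ d, X d,
        ∑ y : ∀ d, X d, (mu x y) ^ 2
          = ∏ d, (Fintype.card (X d) : ℝ) * ((Fintype.card (X d) : ℝ) - 1)) := by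
  constructor
  · intro y a x
    have key : ∀ z : X a,
        mu (Function.update x a z) y
          = ((Fintype.card (X a) : ℝ) * (if z = y a then 1 else 0) - 1) *
            ∏ d ∈ Finset.univ.erase a,
              ((Fintype.card (X d) : ℝ) * (if x d = y d then 1 else 0) - 1) := by
      intro z
      rw [hmu, ← Finset.mul_prod_erase (a := a) (h := Finset.mem_univ a)]
      congr 1
      · simp
      · exact Finset.prod_congr rfl fun d hd => by
          rw [Function.update_of_ne (Finset.ne_of_mem_erase hd)]
    simp only [key, ← Finset.sum_mul]
    have : ∑ z : X a, ((Fintype.card (X a) : ℝ) * (if z = y a then 1 else 0) - 1) = 0 := by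
      simp [Finset.sum_sub_distrib, ← Finset.mul_sum, Finset.sum_ite_eq',
        Finset.card_univ, mul_comm]
    rw [this, zero_mul]
  · intro x
    have : ∀ y : ∀ d, X d, mu x y ^ 2
        = ∏ d, ((Fintype.card (X d) : ℝ) * (if x d = y d then 1 else 0) - 1) ^ 2 := by
      intro y; rw [hmu, ← Finset.prod_pow]
    simp only [this]
    rw [← Fintype.prod_sum fun d t => ((Fintype.card (X d) : ℝ) * (if x d = t then 1 else 0) - 1) ^ 2]
    refine Finset.prod_congr rfl fun d _ => ?_
    have hcard : (0 : ℝ) < Fintype.card (X d) := by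
      exact_mod_cast Fintype.card_pos
    have : ∑ t : X d, ((Fintype.card (X d) : ℝ) * (if x d = t then 1 else 0) - 1) ^ 2
        = ∑ t : X d, (if x d = t then ((Fintype.card (X d) : ℝ) - 1) ^ 2 else 1) := by
      refine Finset.sum_congr rfl fun t _ => ?_
      split <;> simp
    rw [this]
    have : ∑ t : X d, (if x d = t then ((Fintype.card (X d) : ℝ) - 1) ^ 2 else 1)
        = ∑ t : X d, ((if x d = t then ((Fintype.card (X d) : ℝ) - 1) ^ 2 - 1 else 0) + 1) := by
      refine Finset.sum_congr rfl fun t _ => ?_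
      split <;> ring
    rw [this, Finset.sum_add_distrib, Finset.sum_ite_eq, Finset.sum_const, Finset.card_univ]
    simp only [Finset.mem_univ, if_true, nsmul_eq_mul, mul_one]
    ring
end

section
/- Let C ⊆ V, let w ∈ sterile(C), and let A be a set with sterile(C) ⊆ A ⊆ C ∪ pa(C). Write C₁ = C ∖ {w}. Then there exist sets A₁ and A₂ such that A = A₁ △ A₂ (symmetric difference), sterile(C₁) ⊆ A₁ ⊆ C₁ ∪ pa(C₁), and {w} ⊆ A₂ ⊆ {w} ∪ pa(w). -/
/-- The parent set of a set of vertices: all vertices having at least one child in `C`. -/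
def parentSet {V : Type*} [Fintype V] [DecidableEq V]
    (edge : V → V → Prop) [DecidableRel edge] (C : Finset V) : Finset V :=
  Finset.univ.filter (fun u => ∃ v ∈ C, edge u v)

/-- The sterile subset of `C`: elements of `C` with no child in `C`. -/
def sterileSet {V : Type*} [Fintype V] [DecidableEq V]
    (edge : V → V → Prop) [DecidableRel edge] (C : Finset V) : Finset V :=
  C \ parentSet edge C

lemma mem_parentSet' {V : Type*} [Fintype V] [DecidableEq V]
    (edge : V → V → Prop) [DecidableRel edge] (C : Finset V) (u : V) :
    u ∈ parentSet edge C ↔ ∃ v ∈ C, edge u v := by simp [parentSet]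

lemma mem_sterileSet' {V : Type*} [Fintype V] [DecidableEq V]
    (edge : V → V → Prop) [DecidableRel edge] (C : Finset V) (u : V) :
    u ∈ sterileSet edge C ↔ u ∈ C ∧ ¬ ∃ v ∈ C, edge u v := by
  simp [sterileSet, mem_parentSet']

/-- Let `C ⊆ V`, `w ∈ sterile(C)`, and let `A` satisfy
`sterile(C) ⊆ A ⊆ C ∪ pa(C)`.  Write `C₁ = C ∖ {w}`.  Then there exist sets `A₁`, `A₂`
with `A = A₁ △ A₂`, `sterile(C₁) ⊆ A₁ ⊆ C₁ ∪ pa(C₁)`, and `{w} ⊆ A₂ ⊆ {w} ∪ pa(w)`. -/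
theorem symmdiff_split_of_sterile
    {V : Type*} [Fintype V] [DecidableEq V]
    (edge : V → V → Prop) [DecidableRel edge]
    (C : Finset V) (w : V) (hw : w ∈ sterileSet edge C)
    (A : Finset V)
    (hA1 : sterileSet edge C ⊆ A) (hA2 : A ⊆ C ∪ parentSet edge C) :
    ∃ A₁ A₂ : Finset V,
      A = (A₁ \ A₂) ∪ (A₂ \ A₁) ∧
      sterileSet edge (C.erase w) ⊆ A₁ ∧
      A₁ ⊆ C.erase w ∪ parentSet edge (C.erase w) ∧
      {w} ⊆ A₂ ∧ A₂ ⊆ {w} ∪ parentSet edge {w} := by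
  classical
  obtain ⟨hwC, hws⟩ := (mem_sterileSet' edge C w).1 hw
  set C₁ := C.erase w with hC₁
  set A₂ : Finset V := insert w ((parentSet edge {w}) ∩
      ((A \ (C₁ ∪ parentSet edge C₁)) ∪ (sterileSet edge C₁ \ A))) with hA₂def
  set A₁ : Finset V := (A \ A₂) ∪ (A₂ \ A) with hA₁def
  have hwA : w ∈ A := hA1 hw
  refine ⟨A₁, A₂, ?_, ?_, ?_, ?_, ?_⟩
  · ext x
    simp only [hA₁def, Finset.mem_union, Finset.mem_sdiff]
    tauto
  · intro x hx
    obtain ⟨hxC₁, hxns⟩ := (mem_sterileSet' edge C₁ x).1 hx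
    have hxw : x ≠ w := Finset.ne_of_mem_erase hxC₁
    by_cases hxA : x ∈ A
    · refine Finset.mem_union_left _ (Finset.mem_sdiff.2 ⟨hxA, ?_⟩)
      simp only [hA₂def, Finset.mem_insert, Finset.mem_inter, Finset.mem_union,
        Finset.mem_sdiff]
      rintro (rfl | ⟨_, ⟨_, hn⟩ | ⟨_, hn⟩⟩)
      · exact hxw rfl
      · exact hn (Or.inl hxC₁)
      · exact hn hxA
    · refine Finset.mem_union_right _ (Finset.mem_sdiff.2 ⟨?_, hxA⟩)
      -- x ∈ C₁ but x ∉ A, so x ∉ sterile(C), hence x has a child in C; that child must be w.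
      have hxC : x ∈ C := Finset.mem_of_mem_erase hxC₁
      have hxnsC : x ∉ sterileSet edge C := fun h => hxA (hA1 h)
      have : ∃ v ∈ C, edge x v := by
        by_contra h
        exact hxnsC ((mem_sterileSet' edge C x).2 ⟨hxC, h⟩)
      obtain ⟨v, hvC, hev⟩ := this
      have hvw : v = w := by
        by_contra hvw
        exact hxns ⟨v, Finset.mem_erase.2 ⟨hvw, hvC⟩, hev⟩
      have hxpw : x ∈ parentSet edge {w} :=
        (mem_parentSet' edge {w} x).2 ⟨w, Finset.mem_singleton_self w, hvw ▸ hev⟩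
      simp only [hA₂def, Finset.mem_insert, Finset.mem_inter, Finset.mem_union,
        Finset.mem_sdiff]
      exact Or.inr ⟨hxpw, Or.inr ⟨hx, hxA⟩⟩
  · intro x hx
    simp only [hA₁def, Finset.mem_union, Finset.mem_sdiff] at hx
    rcases hx with ⟨hxA, hxA₂⟩ | ⟨hxA₂, hxA⟩
    · by_contra hxn
      apply hxA₂
      simp only [hA₂def, Finset.mem_insert, Finset.mem_inter, Finset.mem_union,
        Finset.mem_sdiff]
      -- x ∈ A ⊆ C ∪ pa C; x ∉ C₁ ∪ pa C₁, so x = w or x ∈ pa {w}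
      have := hA2 hxA
      rcases Finset.mem_union.1 this with hxC | hxpC
      · left
        by_contra hxw
        exact hxn (Finset.mem_union_left _ (Finset.mem_erase.2 ⟨hxw, hxC⟩))
      · obtain ⟨v, hvC, hev⟩ := (mem_parentSet' edge C x).1 hxpC
        by_cases hvw : v = w
        · exact Or.inr ⟨(mem_parentSet' edge {w} x).2
            ⟨w, Finset.mem_singleton_self w, hvw ▸ hev⟩,
            Or.inl ⟨hxA, fun h => hxn (Finset.mem_union.2 h)⟩⟩
        · exact absurd (Finset.mem_union_right _ ((mem_parentSet' edge C₁ x).2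
            ⟨v, Finset.mem_erase.2 ⟨hvw, hvC⟩, hev⟩)) hxn
    · simp only [hA₂def, Finset.mem_insert, Finset.mem_inter, Finset.mem_union,
        Finset.mem_sdiff] at hxA₂
      rcases hxA₂ with rfl | ⟨_, h⟩
      · exact absurd hwA hxA
      · rcases h with ⟨hxa, _⟩ | ⟨hs, _⟩
        · exact absurd hxa hxA
        · exact Finset.mem_union_left _ ((mem_sterileSet' edge C₁ x).1 hs).1
  · intro x hx
    rw [Finset.mem_singleton] at hx
    subst hx
    exact Finset.mem_insert_self _ _
  · intro x hx
    simp only [hA₂def, Finset.mem_insert, Finset.mem_inter] at hx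
    rcases hx with rfl | ⟨hp, _⟩
    · exact Finset.mem_union_left _ (Finset.mem_singleton_self _)
    · exact Finset.mem_union_right _ hp
end

section
/- Let C ⊆ ⋃_i B_i be a nonempty bidirected-connected set and let I_C = { i ∈ {1,…,k} : R_i ∩ C ≠ ∅ }. Then there exists a rooted tree with vertex set I_C, i.e. a root l ∈ I_C together with a parent function assigning to each j ∈ I_C ∖ {l} a parent p(j) ∈ I_C such that the directed graph with edge set { (p(j), j) : j ∈ I_C ∖ {l} } is an arborescence rooted at l with all edges directed away from l, with the property that for every edge i → j of this tree there exist v_i ∈ R_i ∩ C and v_j ∈ R_j ∩ C with v_j ∈ π(v_i). -/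
/-- The remainder set `R_j = B_j ∖ (B_1 ∪ ⋯ ∪ B_{j−1})`. -/
def remainderSet {V : Type*} [DecidableEq V] {k : ℕ}
    (B : Fin k → Finset V) (j : Fin k) : Finset V :=
  B j \ (Finset.Iio j).biUnion B

/-- For `v ∈ R_j`, `π(v) = ⋃ { R_i : i > j and v ∈ B_i }`. -/
def piSet {V : Type*} [DecidableEq V] {k : ℕ}
    (B : Fin k → Finset V) (v : V) : Finset V :=
  (Finset.univ.filter (fun i : Fin k =>
    v ∈ B i ∧ ∃ j : Fin k, v ∈ remainderSet B j ∧ j < i)).biUnion (remainderSet B)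

/-- `C` is bidirected-connected: any two of its members are joined by a path within `C`
whose consecutive elements lie together in some `B_i`. -/
def BidirConnected {V : Type*} {k : ℕ} (B : Fin k → Finset V) (C : Finset V) : Prop :=
  ∀ v ∈ C, ∀ w ∈ C, Relation.ReflTransGen
    (fun a b : V => a ∈ C ∧ b ∈ C ∧ a ≠ b ∧ ∃ i, a ∈ B i ∧ b ∈ B i) v w

/-- Let `C` be a nonempty bidirected-connected subset of `⋃_i B_i` and
`I_C = { i : R_i ∩ C ≠ ∅ }`.  Then there is a rooted tree on `I_C`: a root `l ∈ I_C`
and a parent function `p` assigning to each `j ∈ I_C ∖ {l}` a parent `p j ∈ I_C`, such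
that the digraph with edges `(p j, j)` is an arborescence rooted at `l` (every vertex of
`I_C` is reachable from `l` along these edges), and for every edge `i → j` there exist
`v_i ∈ R_i ∩ C` and `v_j ∈ R_j ∩ C` with `v_j ∈ π(v_i)`. -/
theorem exists_rooted_tree_on_IC
    {V : Type*} [Fintype V] [DecidableEq V]
    (k : ℕ) (B : Fin k → Finset V)
    (hsize : ∀ i, 2 ≤ (B i).card)
    (hRIP : ∀ j : Fin k, j.val ≠ 0 →
      ∃ s, s < j ∧ B j ∩ (Finset.Iio j).biUnion B = B j ∩ B s)
    (C : Finset V) (hCne : C.Nonempty)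
    (hCsub : C ⊆ Finset.univ.biUnion B)
    (hCconn : BidirConnected B C)
    (IC : Finset (Fin k))
    (hIC : IC = Finset.univ.filter (fun i => (remainderSet B i ∩ C).Nonempty)) :
    ∃ l ∈ IC, ∃ p : Fin k → Fin k,
      (∀ j ∈ IC, j ≠ l → p j ∈ IC) ∧
      (∀ j ∈ IC, Relation.ReflTransGen
        (fun a b : Fin k => b ∈ IC ∧ b ≠ l ∧ p b = a) l j) ∧
      (∀ j ∈ IC, j ≠ l →
        ∃ vi ∈ remainderSet B (p j) ∩ C, ∃ vj ∈ remainderSet B j ∩ C,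
          vj ∈ piSet B vi) := by
  classical
  obtain ⟨v0, hv0⟩ := hCne
  obtain ⟨i0, -, hi0⟩ := Finset.mem_biUnion.1 (hCsub hv0)
  -- the running-intersection "parent" function S
  obtain ⟨S, hSlt, hSspec, hS0⟩ :
      ∃ S : Fin k → Fin k,
        (∀ j : Fin k, j.val ≠ 0 → S j < j) ∧
        (∀ j : Fin k, j.val ≠ 0 →
          B j ∩ (Finset.Iio j).biUnion B = B j ∩ B (S j)) ∧
        (∀ j : Fin k, j.val = 0 → S j = j) := by
    refine ⟨fun j => if h : j.val ≠ 0 then (hRIP j h).choose else j, ?_, ?_, ?_⟩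
    · intro j h; simp only [dif_pos h]; exact (hRIP j h).choose_spec.1
    · intro j h; simp only [dif_pos h]; exact (hRIP j h).choose_spec.2
    · intro j h; exact dif_neg (by simp [h])
  have hSle : ∀ j, S j ≤ j := by
    intro j
    by_cases h : j.val = 0
    · rw [hS0 j h]
    · exact le_of_lt (hSlt j h)
  set InCh : Fin k → Fin k → Prop := fun c m => ∃ n : ℕ, S^[n] m = c with hInCh
  have hch_self : ∀ m, InCh m m := fun m => ⟨0, rfl⟩
  have hch_one : ∀ m, InCh (S m) m := fun m => ⟨1, rfl⟩
  have hch_up : ∀ c m, InCh c (S m) → InCh c m := by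
    rintro c m ⟨n, h⟩
    exact ⟨n + 1, by rw [Function.iterate_succ_apply]; exact h⟩
  have iter_le : ∀ (n : ℕ) (m : Fin k), S^[n] m ≤ m := by
    intro n
    induction n with
    | zero => intro m; simp
    | succ n IH =>
      intro m; rw [Function.iterate_succ_apply]; exact le_trans (IH (S m)) (hSle m)
  have hch_le : ∀ c m, InCh c m → c ≤ m := by
    rintro c m ⟨n, h⟩; rw [← h]; exact iter_le n m
  have hch_step : ∀ c m, InCh c m → c ≠ m → InCh c (S m) := by
    rintro c m ⟨n, h⟩ hne
    cases n with
    | zero =>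
      simp only [Function.iterate_zero_apply] at h
      exact absurd h.symm hne
    | succ n => exact ⟨n, by rw [Function.iterate_succ_apply] at h; exact h⟩
  -- L1
  have hL1 : ∀ (v : V) (m i : Fin k), v ∈ B m → v ∈ B i → i < m → v ∈ B (S m) := by
    intro v m i hvm hvi him
    have hm0 : m.val ≠ 0 := by have := Fin.lt_def.mp him; omega
    have hv : v ∈ B m ∩ (Finset.Iio m).biUnion B :=
      Finset.mem_inter.2 ⟨hvm, Finset.mem_biUnion.2 ⟨i, Finset.mem_Iio.2 him, hvi⟩⟩
    rw [hSspec m hm0] at hv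
    exact (Finset.mem_inter.1 hv).2
  -- minimal index function r
  obtain ⟨r, hr_mem, hr_min⟩ :
      ∃ r : V → Fin k, (∀ v i, v ∈ B i → v ∈ B (r v)) ∧ (∀ v i, v ∈ B i → r v ≤ i) := by
    refine ⟨fun v => if h : (Finset.univ.filter (fun i => v ∈ B i)).Nonempty
      then Finset.min' _ h else i0, ?_, ?_⟩
    · intro v i hvi
      have hne : (Finset.univ.filter (fun i => v ∈ B i)).Nonempty := ⟨i, by simp [hvi]⟩
      simp only [dif_pos hne]
      have := Finset.min'_mem _ hne
      simpa using this
    · intro v i hvi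
      have hne : (Finset.univ.filter (fun i => v ∈ B i)).Nonempty := ⟨i, by simp [hvi]⟩
      simp only [dif_pos hne]
      exact Finset.min'_le _ i (by simp [hvi])
  have hr_rem : ∀ v i, v ∈ B i → v ∈ remainderSet B (r v) := by
    intro v i hvi
    rw [remainderSet, Finset.mem_sdiff]
    refine ⟨hr_mem v i hvi, ?_⟩
    intro hmem
    obtain ⟨t, ht, hvt⟩ := Finset.mem_biUnion.1 hmem
    exact absurd (hr_min v t hvt) (not_le.2 (Finset.mem_Iio.1 ht))
  have hrem_r : ∀ v j, v ∈ remainderSet B j → r v = j := by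
    intro v j hv
    rw [remainderSet, Finset.mem_sdiff] at hv
    obtain ⟨hvj, hnot⟩ := hv
    rcases lt_or_eq_of_le (hr_min v j hvj) with h | h
    · exact absurd (Finset.mem_biUnion.2 ⟨r v, Finset.mem_Iio.2 h, hr_mem v j hvj⟩) hnot
    · exact h
  -- Lemma Y
  have hY : ∀ (j : Fin k) (n : ℕ) (m : Fin k) (v : V), m.val ≤ n → v ∈ B j → v ∈ B m →
      j < m → ∃ c, InCh c m ∧ c ≤ j ∧ v ∈ B c := by
    intro j n
    induction n with
    | zero =>
      intro m v hm _ _ hjm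
      exact absurd (Fin.lt_def.mp hjm) (by omega)
    | succ n IH =>
      intro m v hm hvj hvm hjm
      have hm0 : m.val ≠ 0 := by have := Fin.lt_def.mp hjm; omega
      have hvS : v ∈ B (S m) := hL1 v m j hvm hvj hjm
      by_cases hle : S m ≤ j
      · exact ⟨S m, hch_one m, hle, hvS⟩
      · push_neg at hle
        have hSm : (S m).val ≤ n := by have := Fin.lt_def.mp (hSlt m hm0); omega
        obtain ⟨c, hc1, hc2, hc3⟩ := IH (S m) v hSm hvj hvS hle
        exact ⟨c, hch_up c m hc1, hc2, hc3⟩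
  -- Lemma X
  have hX : ∀ (j : Fin k) (n : ℕ) (m i : Fin k) (v : V), m.val + i.val ≤ n →
      v ∈ B m → v ∈ B i → InCh j m → ¬ InCh j i → v ∈ B j := by
    intro j n
    induction n with
    | zero =>
      intro m i v hn hvm hvi hm hi
      have hmi : i = m := Fin.ext (by omega)
      exact absurd (by rw [hmi]; exact hm) hi
    | succ n IH =>
      intro m i v hn hvm hvi hm hi
      by_cases hjm : j = m
      · rw [hjm]; exact hvm
      · have hjltm : j < m := lt_of_le_of_ne (hch_le j m hm) hjm
        have hm0 : m.val ≠ 0 := by have := Fin.lt_def.mp hjltm; omega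
        rcases lt_trichotomy i m with h | h | h
        · have hvS : v ∈ B (S m) := hL1 v m i hvm hvi h
          have hch : InCh j (S m) := hch_step j m hm hjm
          apply IH (S m) i v ?_ hvS hvi hch hi
          have := Fin.lt_def.mp (hSlt m hm0); omega
        · exact absurd (by rw [h]; exact hm) hi
        · have hi0 : i.val ≠ 0 := by have := Fin.lt_def.mp h; omega
          have hvS : v ∈ B (S i) := hL1 v i m hvi hvm h
          have hni : ¬ InCh j (S i) := fun hc => hi (hch_up j i hc)
          apply IH m (S i) v ?_ hvm hvS hm hni
          have := Fin.lt_def.mp (hSlt i hi0); omega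
  -- IC facts
  have ICmem : ∀ j, j ∈ IC ↔ (remainderSet B j ∩ C).Nonempty := by
    intro j; rw [hIC]; simp
  have hICne : IC.Nonempty :=
    ⟨r v0, (ICmem _).2 ⟨v0, Finset.mem_inter.2 ⟨hr_rem v0 i0 hi0, hv0⟩⟩⟩
  set l := IC.min' hICne with hl
  have hlIC : l ∈ IC := Finset.min'_mem _ _
  have hlmin : ∀ j ∈ IC, l ≤ j := fun j hj => Finset.min'_le _ _ hj
  -- main claim
  have main : ∀ j, j ∈ IC → j ≠ l →
      ∃ i, i ∈ IC ∧ i < j ∧ ∃ vi ∈ remainderSet B i ∩ C,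
        ∃ vj ∈ remainderSet B j ∩ C, vj ∈ piSet B vi := by
    intro j hj hjl
    have hlj : l < j := lt_of_le_of_ne (hlmin j hj) (Ne.symm hjl)
    obtain ⟨vj, hvj⟩ := (ICmem j).1 hj
    obtain ⟨w, hw⟩ := (ICmem l).1 hlIC
    rw [Finset.mem_inter] at hvj hw
    obtain ⟨hvjR, hvjC⟩ := hvj
    obtain ⟨hwR, hwC⟩ := hw
    have hrvj : r vj = j := hrem_r vj j hvjR
    have hrw : r w = l := hrem_r w l hwR
    have hrtg := hCconn vj hvjC w hwC
    have flip : ∀ y, Relation.ReflTransGen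
        (fun a b : V => a ∈ C ∧ b ∈ C ∧ a ≠ b ∧ ∃ i, a ∈ B i ∧ b ∈ B i) vj y →
        ¬ InCh j (r y) →
        ∃ a b m', a ∈ C ∧ b ∈ C ∧ a ∈ B m' ∧ b ∈ B m' ∧ InCh j (r a) ∧ ¬ InCh j (r b) := by
      intro y hy
      induction hy with
      | refl =>
        intro hcon
        exact absurd (by rw [hrvj]; exact hch_self j) hcon
      | @tail b c h1 h2 IH =>
        intro hc
        by_cases hb : InCh j (r b)
        · obtain ⟨hbC, hcC, hne, m', hbm, hcm⟩ := h2
          exact ⟨b, c, m', hbC, hcC, hbm, hcm, hb, hc⟩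
        · exact IH hb
    obtain ⟨a, b, m', haC, hbC, ham, hbm, hja, hjb⟩ := flip w hrtg (by
      rw [hrw]
      intro hcon
      exact absurd (hch_le j l hcon) (not_le.2 hlj))
    by_cases hjm : InCh j m'
    · have hbBj : b ∈ B j :=
        hX j (m'.val + (r b).val) m' (r b) b le_rfl hbm (hr_mem b m' hbm) hjm hjb
      have hrb_le : r b ≤ j := hr_min b j hbBj
      have hrb_ne : r b ≠ j := fun h => hjb (by rw [h]; exact hch_self j)
      have hrb_lt : r b < j := lt_of_le_of_ne hrb_le hrb_ne
      have hbmem : b ∈ remainderSet B (r b) ∩ C :=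
        Finset.mem_inter.2 ⟨hr_rem b m' hbm, hbC⟩
      refine ⟨r b, (ICmem _).2 ⟨b, hbmem⟩, hrb_lt, b, hbmem, vj,
        Finset.mem_inter.2 ⟨hvjR, hvjC⟩, ?_⟩
      exact Finset.mem_biUnion.2 ⟨j, Finset.mem_filter.2
        ⟨Finset.mem_univ j, hbBj, ⟨r b, hr_rem b m' hbm, hrb_lt⟩⟩, hvjR⟩
    · exfalso
      have haBj : a ∈ B j :=
        hX j ((r a).val + m'.val) (r a) m' a le_rfl (hr_mem a m' ham) ham hja hjm
      have hra : r a = j := le_antisymm (hr_min a j haBj) (hch_le j (r a) hja)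
      have hm'j : j < m' := by
        rcases lt_trichotomy m' j with h | h | h
        · have h2 := hr_min a m' ham
          rw [hra] at h2
          exact absurd h2 (not_le.2 h)
        · exact absurd (by rw [h]; exact hch_self j) hjm
        · exact h
      obtain ⟨c, hc1, hc2, hc3⟩ := hY j m'.val m' a le_rfl haBj ham hm'j
      rcases lt_or_eq_of_le hc2 with h | h
      · have h2 := hr_min a c hc3
        rw [hra] at h2
        exact absurd h2 (not_le.2 h)
      · rw [h] at hc1
        exact hjm hc1
  -- parent function
  obtain ⟨p, hp⟩ : ∃ p : Fin k → Fin k, ∀ j, j ∈ IC → j ≠ l →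
      p j ∈ IC ∧ p j < j ∧ ∃ vi ∈ remainderSet B (p j) ∩ C,
        ∃ vj ∈ remainderSet B j ∩ C, vj ∈ piSet B vi := by
    refine ⟨fun j => if h : j ∈ IC ∧ j ≠ l then (main j h.1 h.2).choose else l, ?_⟩
    intro j hj hjl
    simp only [dif_pos (show j ∈ IC ∧ j ≠ l from ⟨hj, hjl⟩)]
    exact (main j hj hjl).choose_spec
  have reach : ∀ n : ℕ, ∀ j, j ∈ IC → j.val ≤ n →
      Relation.ReflTransGen (fun a b : Fin k => b ∈ IC ∧ b ≠ l ∧ p b = a) l j := by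
    intro n
    induction n with
    | zero =>
      intro j hj hjn
      have hjl : j ≤ l := Fin.le_def.mpr (by omega)
      have : l = j := le_antisymm (hlmin j hj) hjl
      rw [← this]
    | succ n IH =>
      intro j hj hjn
      by_cases hjl : j = l
      · rw [hjl]
      · obtain ⟨h1, h2, -⟩ := hp j hj hjl
        have hpn : (p j).val ≤ n := by have := Fin.lt_def.mp h2; omega
        exact (IH (p j) h1 hpn).tail ⟨hj, hjl, rfl⟩
  refine ⟨l, hlIC, p, ?_, ?_, ?_⟩
  · intro j hj hjl; exact (hp j hj hjl).1
  · intro j hj; exact reach j.val j hj le_rfl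
  · intro j hj hjl; exact (hp j hj hjl).2.2
end

section
/- Let C ⊆ ⋃_i B_i be a nonempty bidirected-connected set, let I_C = { i ∈ {1,…,k} : R_i ∩ C ≠ ∅ }, and let Π* be the directed graph on vertex set I_C having an edge i → j exactly when there exist v_i ∈ R_i ∩ C and v_j ∈ R_j ∩ C with v_j ∈ π(v_i). Then there exists an element l ∈ I_C such that every element of I_C is reachable from l by a directed path in Π*. -/
section Aux

variable {V : Type*} [DecidableEq V] {k : ℕ} {B : Fin k → Finset V}

lemma mem_B_of_mem_remainder {v : V} {q : Fin k} (h : v ∈ remainderSet B q) : v ∈ B q :=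
  (Finset.mem_sdiff.mp h).1

lemma idx_le {v : V} {q r : Fin k} (hq : v ∈ remainderSet B q) (hr : v ∈ B r) : q ≤ r := by
  by_contra h
  push_neg at h
  exact (Finset.mem_sdiff.mp hq).2 (Finset.mem_biUnion.mpr ⟨r, Finset.mem_Iio.mpr h, hr⟩)

lemma remainder_unique {v : V} {q q' : Fin k} (h : v ∈ remainderSet B q)
    (h' : v ∈ remainderSet B q') : q = q' :=
  le_antisymm (idx_le h (mem_B_of_mem_remainder h')) (idx_le h' (mem_B_of_mem_remainder h))

lemma exists_idx {v : V} (h : v ∈ Finset.univ.biUnion B) : ∃ m, v ∈ remainderSet B m := by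
  obtain ⟨i, -, hi⟩ := Finset.mem_biUnion.mp h
  have hS : (Finset.univ.filter (fun i : Fin k => v ∈ B i)).Nonempty :=
    ⟨i, Finset.mem_filter.mpr ⟨Finset.mem_univ _, hi⟩⟩
  set S := Finset.univ.filter (fun i : Fin k => v ∈ B i) with hSdef
  refine ⟨S.min' hS, Finset.mem_sdiff.mpr ⟨?_, ?_⟩⟩
  · exact (Finset.mem_filter.mp (S.min'_mem hS)).2
  · intro hmem
    obtain ⟨p, hp, hvp⟩ := Finset.mem_biUnion.mp hmem
    have hle : S.min' hS ≤ p := S.min'_le p (Finset.mem_filter.mpr ⟨Finset.mem_univ _, hvp⟩)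
    exact absurd (Finset.mem_Iio.mp hp) (not_lt.mpr hle)

/-- The step relation of the junction-tree chain: `a → s' a`. -/
def chainStep {k : ℕ} (s' : Fin k → Fin k) : Fin k → Fin k → Prop :=
  fun a b => a.val ≠ 0 ∧ b = s' a

end Aux

/-- Let `C` be a nonempty bidirected-connected subset of `⋃_i B_i`, let
`I_C = { i : R_i ∩ C ≠ ∅ }`, and let `Π*` be the digraph on `I_C` with an edge `i → j`
exactly when there exist `v_i ∈ R_i ∩ C` and `v_j ∈ R_j ∩ C` with `v_j ∈ π(v_i)`.  Then
some `l ∈ I_C` reaches every element of `I_C` by a directed path in `Π*`. -/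
theorem pi_star_has_reaching_root
    {V : Type*} [Fintype V] [DecidableEq V]
    (k : ℕ) (B : Fin k → Finset V)
    (hsize : ∀ i, 2 ≤ (B i).card)
    (hRIP : ∀ j : Fin k, j.val ≠ 0 →
      ∃ s, s < j ∧ B j ∩ (Finset.Iio j).biUnion B = B j ∩ B s)
    (C : Finset V) (hCne : C.Nonempty)
    (hCsub : C ⊆ Finset.univ.biUnion B)
    (hCconn : BidirConnected B C)
    (IC : Finset (Fin k))
    (hIC : IC = Finset.univ.filter (fun i => (remainderSet B i ∩ C).Nonempty)) :
    ∃ l ∈ IC, ∀ j ∈ IC,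
      Relation.ReflTransGen
        (fun a b : Fin k => a ∈ IC ∧ b ∈ IC ∧
          ∃ va ∈ remainderSet B a ∩ C, ∃ vb ∈ remainderSet B b ∩ C, vb ∈ piSet B va)
        l j := by
  classical
  subst hIC
  -- choose the running-intersection "parent" function s'
  have exs : ∀ j : Fin k, ∃ s : Fin k, j.val ≠ 0 →
      s < j ∧ B j ∩ (Finset.Iio j).biUnion B = B j ∩ B s := by
    intro j
    by_cases h : j.val = 0
    · exact ⟨j, fun h' => absurd h h'⟩
    · obtain ⟨s, h1, h2⟩ := hRIP j h
      exact ⟨s, fun _ => ⟨h1, h2⟩⟩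
  choose s' hs' using exs
  -- reaching j by chain steps implies being ≥ j
  have InT_le : ∀ j q : Fin k, Relation.ReflTransGen (chainStep s') q j → j ≤ q := by
    intro j q h
    induction h with
    | refl => exact le_refl _
    | tail h hstep ih =>
      obtain ⟨h0, hc⟩ := hstep
      exact le_trans (le_of_lt (hc ▸ (hs' _ h0).1)) ih
  -- the basic RIP consequence
  have memA : ∀ (p r : Fin k) (v : V), v ∈ B p → v ∈ B r → r < p → v ∈ B (s' p) := by
    intro p r v hp hr hrp
    have hlt : r.val < p.val := hrp
    have h0 : p.val ≠ 0 := by omega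
    have heq := (hs' p h0).2
    have hmem : v ∈ B p ∩ (Finset.Iio p).biUnion B :=
      Finset.mem_inter.mpr ⟨hp, Finset.mem_biUnion.mpr ⟨r, Finset.mem_Iio.mpr hrp, hr⟩⟩
    rw [heq] at hmem
    exact (Finset.mem_inter.mp hmem).2
  -- claim 1: if v ∈ B p and the index of v reaches j, then p reaches j
  have claim1 : ∀ (j : Fin k) (n : ℕ) (p : Fin k), p.val ≤ n → ∀ (q : Fin k) (v : V),
      v ∈ B p → v ∈ remainderSet B q → Relation.ReflTransGen (chainStep s') q j →
      Relation.ReflTransGen (chainStep s') p j := by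
    intro j n
    induction n with
    | zero =>
      intro p hp q v hvp hvq hq
      have hq_le : q.val ≤ p.val := idx_le hvq hvp
      have : q = p := Fin.ext (by omega)
      exact this ▸ hq
    | succ n ih =>
      intro p hp q v hvp hvq hq
      have hq_le : q ≤ p := idx_le hvq hvp
      rcases eq_or_lt_of_le hq_le with heq | hlt
      · exact heq ▸ hq
      · have hltv : q.val < p.val := hlt
        have h0 : p.val ≠ 0 := by omega
        have hvs : v ∈ B (s' p) := memA p q v hvp (mem_B_of_mem_remainder hvq) hlt
        have hsp : (s' p).val < p.val := (hs' p h0).1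
        have hrec := ih (s' p) (by omega) q v hvs hvq hq
        exact Relation.ReflTransGen.head ⟨h0, rfl⟩ hrec
  -- claim 3: if v ∈ B p, p reaches j, but the index q of v does not reach j,
  -- then v ∈ B j and q < j
  have claim3 : ∀ (j : Fin k) (n : ℕ) (p : Fin k), p.val ≤ n →
      Relation.ReflTransGen (chainStep s') p j → ∀ (q : Fin k) (v : V),
      v ∈ B p → v ∈ remainderSet B q →
      ¬ Relation.ReflTransGen (chainStep s') q j →
      v ∈ B j ∧ q < j := by
    intro j n
    induction n with
    | zero =>
      intro p hp hreach q v hvp hvq hnq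
      have hq_le : q.val ≤ p.val := idx_le hvq hvp
      have : q = p := Fin.ext (by omega)
      exact absurd (this ▸ hreach) hnq
    | succ n ih =>
      intro p hp hreach q v hvp hvq hnq
      have hq_le : q ≤ p := idx_le hvq hvp
      rcases Relation.ReflTransGen.cases_head hreach with heq | ⟨b, hstep, hb⟩
      · subst heq
        have hne : q ≠ p := fun h => hnq (h ▸ Relation.ReflTransGen.refl)
        exact ⟨hvp, lt_of_le_of_ne hq_le hne⟩
      · obtain ⟨h0, hbs⟩ := hstep
        subst hbs
        have hne : q ≠ p := fun h => hnq (h ▸ hreach)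
        have hqp : q < p := lt_of_le_of_ne hq_le hne
        have hvs : v ∈ B (s' p) := memA p q v hvp (mem_B_of_mem_remainder hvq) hqp
        have hsp : (s' p).val < p.val := (hs' p h0).1
        exact ih (s' p) (by omega) hb q v hvs hvq hnq
  -- path lemma: walking in C from a non-reaching index to a reaching index,
  -- we find a vertex of C in B j with index < j
  have pathlem : ∀ (j : Fin k) (u w : V),
      Relation.ReflTransGen
        (fun a b : V => a ∈ C ∧ b ∈ C ∧ a ≠ b ∧ ∃ i, a ∈ B i ∧ b ∈ B i) u w →
      (∀ qu, u ∈ remainderSet B qu → ¬ Relation.ReflTransGen (chainStep s') qu j) →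
      (∃ qw, w ∈ remainderSet B qw ∧ Relation.ReflTransGen (chainStep s') qw j) →
      ∃ va ∈ C, va ∈ B j ∧ ∃ i, va ∈ remainderSet B i ∧ i < j := by
    intro j u w hpath
    induction hpath using Relation.ReflTransGen.head_induction_on with
    | refl =>
      intro hu hw
      obtain ⟨qw, hw1, hw2⟩ := hw
      exact absurd hw2 (hu qw hw1)
    | @head a c h' hrest ih =>
      intro hu hw
      obtain ⟨ha, hc, hne, p, hap, hcp⟩ := h'
      obtain ⟨qc, hqc⟩ := exists_idx (B := B) (hCsub hc)
      by_cases hreach : Relation.ReflTransGen (chainStep s') qc j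
      · obtain ⟨qa, hqa⟩ := exists_idx (B := B) (hCsub ha)
        have hpj : Relation.ReflTransGen (chainStep s') p j :=
          claim1 j p.val p le_rfl qc c hcp hqc hreach
        have hres := claim3 j p.val p le_rfl hpj qa a hap hqa (hu qa hqa)
        exact ⟨a, ha, hres.1, qa, hqa, hres.2⟩
      · exact ih (fun q hq => by rw [remainder_unique hq hqc]; exact hreach) hw
  -- set up the minimum of I_C
  have hICne : (Finset.univ.filter
      (fun i : Fin k => (remainderSet B i ∩ C).Nonempty)).Nonempty := by
    obtain ⟨v, hv⟩ := hCne
    obtain ⟨m, hm⟩ := exists_idx (B := B) (hCsub hv)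
    exact ⟨m, Finset.mem_filter.mpr ⟨Finset.mem_univ _, ⟨v, Finset.mem_inter.mpr ⟨hm, hv⟩⟩⟩⟩
  set l := (Finset.univ.filter
      (fun i : Fin k => (remainderSet B i ∩ C).Nonempty)).min' hICne with hl
  have hlmem : l ∈ Finset.univ.filter
      (fun i : Fin k => (remainderSet B i ∩ C).Nonempty) := Finset.min'_mem _ _
  obtain ⟨ul, hul⟩ := (Finset.mem_filter.mp hlmem).2
  have hulR := (Finset.mem_inter.mp hul).1
  have hulC := (Finset.mem_inter.mp hul).2
  refine ⟨l, hlmem, ?_⟩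
  have main : ∀ (n : ℕ) (j : Fin k),
      j ∈ Finset.univ.filter (fun i : Fin k => (remainderSet B i ∩ C).Nonempty) →
      j.val ≤ n →
      Relation.ReflTransGen
        (fun a b : Fin k =>
          a ∈ Finset.univ.filter (fun i : Fin k => (remainderSet B i ∩ C).Nonempty) ∧
          b ∈ Finset.univ.filter (fun i : Fin k => (remainderSet B i ∩ C).Nonempty) ∧
          ∃ va ∈ remainderSet B a ∩ C, ∃ vb ∈ remainderSet B b ∩ C, vb ∈ piSet B va)
        l j := by
    intro n
    induction n with
    | zero =>
      intro j hj hjn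
      have hle : l ≤ j := Finset.min'_le _ _ hj
      have hlev : l.val ≤ j.val := hle
      have : l = j := Fin.ext (by omega)
      exact this ▸ Relation.ReflTransGen.refl
    | succ n ih =>
      intro j hj hjn
      rcases eq_or_lt_of_le (Finset.min'_le _ _ hj) with heq | hlt
      · exact heq ▸ Relation.ReflTransGen.refl
      · obtain ⟨w, hw⟩ := (Finset.mem_filter.mp hj).2
        have hwR := (Finset.mem_inter.mp hw).1
        have hwC := (Finset.mem_inter.mp hw).2
        obtain ⟨va, hvaC, hvaBj, i, hvaRi, hij⟩ :=
          pathlem j ul w (hCconn ul hulC w hwC)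
            (fun qu hq => by
              rw [remainder_unique hq hulR]
              intro hr
              exact absurd (InT_le j l hr) (not_le.mpr hlt))
            ⟨j, hwR, Relation.ReflTransGen.refl⟩
        have hiIC : i ∈ Finset.univ.filter
            (fun i : Fin k => (remainderSet B i ∩ C).Nonempty) :=
          Finset.mem_filter.mpr ⟨Finset.mem_univ _,
            ⟨va, Finset.mem_inter.mpr ⟨hvaRi, hvaC⟩⟩⟩
        have hijv : i.val < j.val := hij
        have hreach_i := ih i hiIC (by omega)
        refine hreach_i.tail ?_
        refine ⟨hiIC, hj, va, Finset.mem_inter.mpr ⟨hvaRi, hvaC⟩, w, hw, ?_⟩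
        exact Finset.mem_biUnion.mpr
          ⟨j, Finset.mem_filter.mpr ⟨Finset.mem_univ _, hvaBj, i, hvaRi, hij⟩, hwR⟩
  exact fun j hj => main j.val j hj le_rfl
end
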